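/- Let V be a finite-dimensional complex vector space with a nondegenerate Hermitian sesquilinear form B, and let Q : V → V be a linear map with Q ∘ Q = 0 that is self-adjoint with respect to B. Then the signature of B on V equals the signature of the induced Hermitian form B̄ on the cohomology H = ker Q / im Q. Equivalently, the BRST doublets make no net contribution to the signature. -/

import Mathlib

section Sesq
variable {W : Type*} [AddCommGroup W] [Module ℂ W] (B : W → W → ℂ)

theorem sesq_smul_left (hlin : ∀ x, IsLinearMap ℂ (B x)) (hherm : ∀ x y, B x y = star (B y x))
    (c : ℂ) (x y : W) : B (c • x) y = star c * B x y := by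
  rw [hherm, (hlin y).map_smul, hherm y x]; simp [mul_comm]

theorem sesq_sum_left (hlin : ∀ x, IsLinearMap ℂ (B x)) (hherm : ∀ x y, B x y = star (B y x))
    {ι : Type*} (s : Finset ι) (f : ι → W) (y : W) :
    B (∑ i ∈ s, f i) y = ∑ i ∈ s, B (f i) y := by
  rw [hherm, show B y = ⇑(IsLinearMap.mk' _ (hlin y)) from rfl, map_sum, star_sum]
  exact Finset.sum_congr rfl fun i _ => by rw [IsLinearMap.mk'_apply, ← hherm]

theorem sesq_sum_right (hlin : ∀ x, IsLinearMap ℂ (B x))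
    {ι : Type*} (s : Finset ι) (f : ι → W) (x : W) :
    B x (∑ i ∈ s, f i) = ∑ i ∈ s, B x (f i) := by
  rw [show B x = ⇑(IsLinearMap.mk' _ (hlin x)) from rfl, map_sum]

theorem sesq_zero_right (hlin : ∀ x, IsLinearMap ℂ (B x)) (x : W) : B x 0 = 0 :=
  (hlin x).map_zero

theorem sesq_zero_left (hlin : ∀ x, IsLinearMap ℂ (B x)) (hherm : ∀ x y, B x y = star (B y x))
    (y : W) : B 0 y = 0 := by
  rw [hherm, (hlin y).map_zero, star_zero]

theorem quad_eval (hlin : ∀ x, IsLinearMap ℂ (B x)) (hherm : ∀ x y, B x y = star (B y x))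
    {ι : Type*} [Fintype ι] [DecidableEq ι] (v : ι → W) (d : ι → ℝ)
    (hv : ∀ i j, B (v i) (v j) = if i = j then (d i : ℂ) else 0) (c : ι → ℂ) :
    (B (∑ i, c i • v i) (∑ j, c j • v j)).re = ∑ i, Complex.normSq (c i) * d i := by
  rw [sesq_sum_left B hlin hherm]
  have h1 : ∀ i, B (c i • v i) (∑ j, c j • v j) = ((Complex.normSq (c i) * d i : ℝ) : ℂ) := by
    intro i
    rw [sesq_smul_left B hlin hherm, sesq_sum_right B hlin]
    have h2 : ∀ j, B (v i) (c j • v j) = c j * B (v i) (v j) := fun j => (hlin (v i)).map_smul _ _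
    simp only [h2, hv]
    rw [Finset.sum_congr rfl (fun j _ => by
      rw [show c j * (if i = j then ((d i : ℂ)) else 0) = if i = j then c j * (d i : ℂ) else 0 by
        split <;> simp])]
    rw [Finset.sum_ite_eq Finset.univ i (fun j => c j * (d i : ℂ))]
    simp only [Finset.mem_univ, if_true]
    rw [← mul_assoc, show star (c i) * c i = ((Complex.normSq (c i) : ℝ) : ℂ) by
      rw [Complex.star_def, mul_comm, Complex.mul_conj]]
    push_cast; ring
  simp only [h1]
  rw [← Complex.ofReal_sum]
  exact Complex.ofReal_re _

end Sesq
open Module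

section Key
variable {W : Type*} [AddCommGroup W] [Module ℂ W] [FiniteDimensional ℂ W]

theorem key_counts (B : W → W → ℂ)
    (hlin : ∀ x, IsLinearMap ℂ (B x)) (hherm : ∀ x y, B x y = star (B y x))
    (hnondeg : ∀ x, (∀ y, B x y = 0) → x = 0)
    {n : ℕ} (b : Basis (Fin n) ℂ W)
    (hG : (Matrix.of fun i j => B (b i) (b j)).IsHermitian) :
    ((Finset.univ.filter fun i => 0 < hG.eigenvalues i).card
        + (Finset.univ.filter fun i => hG.eigenvalues i < 0).card = n)
    ∧ (∃ S : Submodule ℂ W, finrank ℂ S = (Finset.univ.filter fun i => 0 < hG.eigenvalues i).card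
        ∧ ∀ x ∈ S, x ≠ 0 → 0 < (B x x).re)
    ∧ (∀ S : Submodule ℂ W, (∀ x ∈ S, x ≠ 0 → 0 < (B x x).re) →
        finrank ℂ S ≤ (Finset.univ.filter fun i => 0 < hG.eigenvalues i).card)
    ∧ (∃ S : Submodule ℂ W, finrank ℂ S = (Finset.univ.filter fun i => hG.eigenvalues i < 0).card
        ∧ ∀ x ∈ S, x ≠ 0 → (B x x).re < 0)
    ∧ (∀ S : Submodule ℂ W, (∀ x ∈ S, x ≠ 0 → (B x x).re < 0) →
        finrank ℂ S ≤ (Finset.univ.filter fun i => hG.eigenvalues i < 0).card) := by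
  classical
  set M : Matrix (Fin n) (Fin n) ℂ := Matrix.of fun i j => B (b i) (b j) with hM
  set U : Matrix (Fin n) (Fin n) ℂ := (hG.eigenvectorUnitary : Matrix (Fin n) (Fin n) ℂ) with hU
  set μ : Fin n → ℝ := hG.eigenvalues with hμ
  set w : Fin n → W := fun j => ∑ k, U k j • b k with hw
  have hfr : finrank ℂ W = n := by rw [finrank_eq_card_basis b, Fintype.card_fin]
  -- Gram matrix of w is diagonal
  have hBww : ∀ i j, B (w i) (w j) = if i = j then ((μ i : ℂ)) else 0 := by
    intro i j
    have h1 : B (w i) (w j) = ∑ k, star (U k i) * ∑ l, U l j * M k l := by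
      rw [hw]
      rw [sesq_sum_left B hlin hherm]
      refine Finset.sum_congr rfl fun k _ => ?_
      rw [sesq_smul_left B hlin hherm]
      congr 1
      rw [sesq_sum_right B hlin]
      refine Finset.sum_congr rfl fun l _ => ?_
      rw [(hlin (b k)).map_smul]
      rfl
    have h2 : B (w i) (w j) = (star U * M * U) i j := by
      rw [h1]
      simp only [Matrix.mul_apply, Matrix.star_apply, Matrix.star_eq_conjTranspose,
        Matrix.conjTranspose_apply, Finset.sum_mul, Finset.mul_sum]
      rw [Finset.sum_comm]
      exact Finset.sum_congr rfl fun k _ => Finset.sum_congr rfl fun l _ => by ring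
    rw [h2, show star U * M * U = _ from (Unitary.conjStarAlgAut_star_apply (S := ℂ) _ _).symm.trans
      hG.conjStarAlgAut_star_eigenvectorUnitary, Matrix.diagonal_apply]
    simp [Function.comp]
    rfl
  -- all eigenvalues are nonzero
  have hdet : M.det ≠ 0 := by
    intro h0
    obtain ⟨v, hv0, hvM⟩ := Matrix.exists_vecMul_eq_zero_iff.mpr h0
    set x : W := ∑ k, star (v k) • b k with hx
    have hxB : ∀ y, B x y = 0 := by
      intro y
      have hxj : ∀ j, B x (b j) = 0 := by
        intro j
        rw [hx, sesq_sum_left B hlin hherm]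
        have : ∀ k, B (star (v k) • b k) (b j) = v k * M k j := by
          intro k
          rw [sesq_smul_left B hlin hherm, star_star]; rfl
        simp only [this]
        have := congrFun hvM j
        simpa [Matrix.vecMul, dotProduct] using this
      conv_lhs => rw [← Basis.sum_repr b y]
      rw [sesq_sum_right B hlin]
      refine Finset.sum_eq_zero fun j _ => ?_
      rw [(hlin x).map_smul, hxj, smul_zero]
    have hx0 : x = 0 := hnondeg x hxB
    apply hv0
    have hli := Fintype.linearIndependent_iff.mp b.linearIndependent (fun k => star (v k))
      (by rw [← hx, hx0])
    funext k
    have := hli k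
    simpa using congrArg star this
  have hμ0 : ∀ i, μ i ≠ 0 := by
    intro i hi
    apply hdet
    rw [hG.det_eq_prod_eigenvalues]
    exact Finset.prod_eq_zero (Finset.mem_univ i) (by rw [← hμ, hi]; exact Complex.ofReal_zero)
  -- w is linearly independent
  have hwli : LinearIndependent ℂ w := by
    rw [Fintype.linearIndependent_iff]
    intro c hc j
    have h1 : B (∑ i, c i • w i) (w j) = 0 := by rw [hc, sesq_zero_left B hlin hherm]
    rw [sesq_sum_left B hlin hherm] at h1
    have h2 : ∀ i, B (c i • w i) (w j) = star (c i) * (if i = j then ((μ i : ℂ)) else 0) := by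
      intro i; rw [sesq_smul_left B hlin hherm, hBww]
    simp only [h2] at h1
    rw [Finset.sum_congr rfl (fun i _ => by
        rw [show star (c i) * (if i = j then ((μ i : ℂ)) else 0)
            = if i = j then star (c i) * (μ i : ℂ) else 0 by split <;> simp]),
      Finset.sum_ite_eq' Finset.univ j (fun i => star (c i) * (μ i : ℂ))] at h1
    simp only [Finset.mem_univ, if_true] at h1
    have hμj : ((μ j : ℂ)) ≠ 0 := by
      simpa using hμ0 j
    have := mul_eq_zero.mp h1
    rcases this with h | h
    · simpa using congrArg star h
    · exact absurd h hμj
  -- the span of a subfamily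
  have hspan : ∀ p : Fin n → Prop, ∀ _ : DecidablePred p,
      ∃ S : Submodule ℂ W, finrank ℂ S = (Finset.univ.filter fun i => p i).card ∧
      ∀ x ∈ S, ∃ c : {i // p i} → ℂ, x = ∑ i, c i • w i.val := by
    intro p hp
    refine ⟨Submodule.span ℂ (Set.range fun i : {i // p i} => w i.val), ?_, ?_⟩
    · exact (finrank_span_eq_card (hwli.comp Subtype.val Subtype.val_injective)).trans
        (Fintype.card_subtype p)
    · intro x hx
      obtain ⟨c, hc⟩ := (Submodule.mem_span_range_iff_exists_fun ℂ).mp hx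
      exact ⟨c, hc.symm⟩
  -- quadratic evaluation on subfamilies
  have hquad : ∀ (p : Fin n → Prop) (_ : DecidablePred p) (c : {i // p i} → ℂ),
      (B (∑ i, c i • w i.val) (∑ j, c j • w j.val)).re
        = ∑ i : {i // p i}, Complex.normSq (c i) * μ i.val := by
    intro p hp c
    exact quad_eval B hlin hherm (fun i : {i // p i} => w i.val) (fun i => μ i.val)
      (fun i j => by rw [hBww]; simp [Subtype.ext_iff]) c
  -- filter identities
  have hPnot : (Finset.univ.filter fun i => ¬ 0 < μ i) = (Finset.univ.filter fun i => μ i < 0) := by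
    apply Finset.filter_congr
    intro i _
    constructor
    · intro h; exact lt_of_le_of_ne (not_lt.mp h) (hμ0 i)
    · intro h; exact not_lt.mpr h.le
  have hNnot : (Finset.univ.filter fun i => ¬ μ i < 0) = (Finset.univ.filter fun i => 0 < μ i) := by
    apply Finset.filter_congr
    intro i _
    constructor
    · intro h; exact lt_of_le_of_ne (not_lt.mp h) (Ne.symm (hμ0 i))
    · intro h; exact not_lt.mpr h.le
  have hsplit : (Finset.univ.filter fun i => 0 < μ i).card
      + (Finset.univ.filter fun i => μ i < 0).card = n := by
    rw [← hPnot]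
    have h := Finset.card_filter_add_card_filter_not (s := (Finset.univ : Finset (Fin n)))
      (p := fun i => 0 < μ i)
    rwa [Finset.card_univ, Fintype.card_fin] at h
  refine ⟨hsplit, ?_, ?_, ?_, ?_⟩
  -- positive subspace exists
  · obtain ⟨SP, hSPrank, hSPmem⟩ := hspan (fun i => 0 < μ i) inferInstance
    refine ⟨SP, hSPrank, ?_⟩
    intro x hx hx0
    obtain ⟨c, hc⟩ := hSPmem x hx
    rw [hc, hquad (fun i => 0 < μ i) inferInstance c]
    apply Finset.sum_pos'
    · intro i _
      exact mul_nonneg (Complex.normSq_nonneg _) i.2.le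
    · have hcne : ∃ i, c i ≠ 0 := by
        by_contra hall
        push_neg at hall
        exact hx0 (hc.trans (Finset.sum_eq_zero fun i _ => by rw [hall i, zero_smul]))
      obtain ⟨i, hi⟩ := hcne
      exact ⟨i, Finset.mem_univ i, mul_pos (Complex.normSq_pos.mpr hi) i.2⟩
  -- positive bound
  · intro S hS
    obtain ⟨N, hNrank, hNmem⟩ := hspan (fun i => ¬ 0 < μ i) inferInstance
    have hNle : ∀ x ∈ N, (B x x).re ≤ 0 := by
      intro x hx
      obtain ⟨c, hc⟩ := hNmem x hx
      rw [hc, hquad (fun i => ¬ 0 < μ i) inferInstance c]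
      exact Finset.sum_nonpos fun i _ =>
        mul_nonpos_of_nonneg_of_nonpos (Complex.normSq_nonneg _) (not_lt.mp i.2)
    have hdisj : S ⊓ N = ⊥ := by
      rw [eq_bot_iff]
      intro x hx
      rw [Submodule.mem_bot]
      by_contra hx0
      have h1 := hS x hx.1 hx0
      have h2 := hNle x hx.2
      linarith
    have heq := Submodule.finrank_sup_add_finrank_inf_eq S N
    rw [hdisj, finrank_bot, add_zero] at heq
    have hle : finrank ℂ ↥(S ⊔ N) ≤ n := hfr ▸ Submodule.finrank_le _
    rw [hPnot] at hNrank
    omega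
  -- negative subspace exists
  · obtain ⟨SN, hSNrank, hSNmem⟩ := hspan (fun i => μ i < 0) inferInstance
    refine ⟨SN, hSNrank, ?_⟩
    intro x hx hx0
    obtain ⟨c, hc⟩ := hSNmem x hx
    rw [hc, hquad (fun i => μ i < 0) inferInstance c]
    have hpos : 0 < ∑ i : {i // μ i < 0}, -(Complex.normSq (c i) * μ i.val) := by
      apply Finset.sum_pos'
      · intro i _
        exact neg_nonneg.mpr (mul_nonpos_of_nonneg_of_nonpos (Complex.normSq_nonneg _) i.2.le)
      · have hcne : ∃ i, c i ≠ 0 := by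
          by_contra hall
          push_neg at hall
          exact hx0 (hc.trans (Finset.sum_eq_zero fun i _ => by rw [hall i, zero_smul]))
        obtain ⟨i, hi⟩ := hcne
        refine ⟨i, Finset.mem_univ i, ?_⟩
        rw [neg_pos]
        exact mul_neg_of_pos_of_neg (Complex.normSq_pos.mpr hi) i.2
    rw [Finset.sum_neg_distrib, neg_pos] at hpos
    exact hpos
  -- negative bound
  · intro S hS
    obtain ⟨N, hNrank, hNmem⟩ := hspan (fun i => ¬ μ i < 0) inferInstance
    have hNle : ∀ x ∈ N, 0 ≤ (B x x).re := by
      intro x hx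
      obtain ⟨c, hc⟩ := hNmem x hx
      rw [hc, hquad (fun i => ¬ μ i < 0) inferInstance c]
      exact Finset.sum_nonneg fun i _ =>
        mul_nonneg (Complex.normSq_nonneg _) (not_lt.mp i.2)
    have hdisj : S ⊓ N = ⊥ := by
      rw [eq_bot_iff]
      intro x hx
      rw [Submodule.mem_bot]
      by_contra hx0
      have h1 := hS x hx.1 hx0
      have h2 := hNle x hx.2
      linarith
    have heq := Submodule.finrank_sup_add_finrank_inf_eq S N
    rw [hdisj, finrank_bot, add_zero] at heq
    have hle : finrank ℂ ↥(S ⊔ N) ≤ n := hfr ▸ Submodule.finrank_le _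
    rw [hNnot] at hNrank
    omega

end Key
section Bridge
open Module
variable {V : Type*} [AddCommGroup V] [Module ℂ V] [FiniteDimensional ℂ V]

theorem bridge (B : V → V → ℂ) (hlin : ∀ x, IsLinearMap ℂ (B x))
    (Q : V →ₗ[ℂ] V) (hQ2 : Q ∘ₗ Q = 0)
    (hselfadj : ∀ x y, B (Q x) y = B x (Q y))
    (S : Submodule ℂ V) (hS : ∀ x ∈ S, x ≠ 0 → (B x x).re ≠ 0) :
    ∃ Sb : Submodule ℂ
      (↥(LinearMap.ker Q) ⧸ (LinearMap.range Q).comap (LinearMap.ker Q).subtype),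
      finrank ℂ S ≤ finrank ℂ Sb + finrank ℂ (LinearMap.range Q) ∧
      ∀ z ∈ Sb, ∃ x : ↥(LinearMap.ker Q), (x : V) ∈ S ∧
        Submodule.Quotient.mk x = z ∧ (z ≠ 0 → (x : V) ≠ 0) := by
  classical
  set K := LinearMap.ker Q with hK
  set J := (LinearMap.range Q).comap K.subtype with hJ
  set T := S ⊓ K with hT
  set T' : Submodule ℂ ↥K := Submodule.comap K.subtype T with hT'
  have hT'rank : finrank ℂ T' = finrank ℂ T :=
    (Submodule.comapSubtypeEquivOfLe (inf_le_right : T ≤ K)).finrank_eq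
  set g : ↥T' →ₗ[ℂ] (↥K ⧸ J) := J.mkQ ∘ₗ T'.subtype with hg
  have hginj : Function.Injective g := by
    rw [← LinearMap.ker_eq_bot, eq_bot_iff]
    rintro ⟨t, ht⟩ hker
    simp only [LinearMap.mem_ker, hg, LinearMap.comp_apply, Submodule.subtype_apply,
      Submodule.mkQ_apply] at hker
    have htJ : t ∈ J := (Submodule.Quotient.mk_eq_zero J).mp hker
    obtain ⟨u, hu⟩ : ∃ u, Q u = (t : V) := htJ
    have hQQu : Q (Q u) = 0 := by
      rw [← LinearMap.comp_apply, hQ2, LinearMap.zero_apply]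
    have hBtt : B (t : V) (t : V) = 0 := by
      rw [← hu, hselfadj, hQQu]
      exact (hlin u).map_zero
    have htT : (t : V) ∈ T := ht
    have htS : (t : V) ∈ S := htT.1
    have ht0 : (t : V) = 0 := by
      by_contra h0
      exact hS _ htS h0 (by rw [hBtt, Complex.zero_re])
    rw [Submodule.mem_bot]
    apply Subtype.ext
    apply Subtype.ext
    exact ht0
  set Sb := LinearMap.range g with hSb
  have hSbrank : finrank ℂ Sb = finrank ℂ T' := LinearMap.finrank_range_of_inj hginj
  refine ⟨Sb, ?_, ?_⟩
  · have h1 := Submodule.finrank_sup_add_finrank_inf_eq S K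
    have h2 : finrank ℂ ↥(S ⊔ K) ≤ finrank ℂ V := Submodule.finrank_le _
    have h3 := LinearMap.finrank_range_add_finrank_ker Q
    rw [← hK] at h3
    rw [hSbrank, hT'rank, hT]
    omega
  · rintro z ⟨t, rfl⟩
    refine ⟨t.val, t.2.1, ?_, ?_⟩
    · simp [hg]
    · intro hz0 hx0
      apply hz0
      have : (t : ↥K) = 0 := Subtype.ext hx0
      simp [hg, this]

end Bridge
section Nondeg
open Module
variable {V : Type*} [AddCommGroup V] [Module ℂ V] [FiniteDimensional ℂ V]

theorem bbar_nondeg (B : V → V → ℂ) (hlin : ∀ x, IsLinearMap ℂ (B x))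
    (hherm : ∀ x y, B x y = star (B y x))
    (hnondeg : ∀ x, (∀ y, B x y = 0) → x = 0)
    (Q : V →ₗ[ℂ] V) (hQ2 : Q ∘ₗ Q = 0)
    (hselfadj : ∀ x y, B (Q x) y = B x (Q y))
    (Bbar : (↥(LinearMap.ker Q) ⧸ (LinearMap.range Q).comap (LinearMap.ker Q).subtype) →
      (↥(LinearMap.ker Q) ⧸ (LinearMap.range Q).comap (LinearMap.ker Q).subtype) → ℂ)
    (hdesc : ∀ x y : LinearMap.ker Q,
      Bbar (Submodule.Quotient.mk x) (Submodule.Quotient.mk y) = B x y) :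
    ∀ xb, (∀ yb, Bbar xb yb = 0) → xb = 0 := by
  classical
  intro xb h
  obtain ⟨x, rfl⟩ := Submodule.Quotient.mk_surjective _ xb
  suffices hx : (x : V) ∈ LinearMap.range Q by
    exact (Submodule.Quotient.mk_eq_zero _).mpr (Submodule.mem_comap.mpr (by simpa using hx))
  set bK : Basis (Fin (finrank ℂ ↥(LinearMap.ker Q))) ℂ ↥(LinearMap.ker Q) :=
    Module.finBasis ℂ _ with hbK
  set L : V →ₗ[ℂ] (Fin (finrank ℂ ↥(LinearMap.ker Q)) → ℂ) :=
    LinearMap.pi (fun i => IsLinearMap.mk' _ (hlin ((bK i : V)))) with hL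
  have hLapp : ∀ (v : V) i, L v i = B (bK i : V) v := fun v i => rfl
  have hLsurj : LinearMap.range L = ⊤ := by
    rw [eq_top_iff]
    intro v _
    rw [← Subspace.forall_mem_dualAnnihilator_apply_eq_zero_iff]
    intro φ hφ
    rw [Submodule.mem_dualAnnihilator] at hφ
    set a : Fin (finrank ℂ ↥(LinearMap.ker Q)) → ℂ :=
      fun i => φ (fun j => if i = j then 1 else 0) with ha
    have hφeq : ∀ u : Fin (finrank ℂ ↥(LinearMap.ker Q)) → ℂ, φ u = ∑ i, u i * a i := by
      intro u
      rw [LinearMap.pi_apply_eq_sum_univ φ u]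
      exact Finset.sum_congr rfl fun i _ => by rw [smul_eq_mul]
    have hz : ∀ u : V, ∑ i, B ((bK i : V)) u * a i = 0 := by
      intro u
      have h1 := hφ (L u) ⟨u, rfl⟩
      rw [hφeq] at h1
      simpa only [hLapp] using h1
    set z : ↥(LinearMap.ker Q) := ∑ i, (star (a i)) • bK i with hzdef
    have hzB : ∀ u, B (z : V) u = 0 := by
      intro u
      have hcoe : (z : V) = ∑ i, (star (a i)) • (bK i : V) := by
        rw [hzdef]; push_cast; rfl
      rw [hcoe, sesq_sum_left B hlin hherm]
      have hterm : ∀ i, B ((star (a i)) • (bK i : V)) u = B (bK i : V) u * a i := by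
        intro i
        rw [sesq_smul_left B hlin hherm, star_star, mul_comm]
      simp only [hterm]
      exact hz u
    have hz0 : z = 0 := by
      have := hnondeg _ hzB
      exact Subtype.ext this
    have ha0 : ∀ i, a i = 0 := by
      intro i
      have hli := Fintype.linearIndependent_iff.mp bK.linearIndependent (fun i => star (a i))
        (by rw [← hzdef, hz0]) i
      simpa using congrArg star hli
    rw [hφeq]
    simp [ha0]
  have hle : LinearMap.range Q ≤ LinearMap.ker L := by
    rintro _ ⟨u, rfl⟩
    rw [LinearMap.mem_ker]
    funext i
    rw [hLapp]
    have hQbK : Q (bK i : V) = 0 := (bK i).2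
    rw [hherm, hselfadj, hQbK, (hlin u).map_zero, star_zero]
    rfl
  have hd1 := LinearMap.finrank_range_add_finrank_ker L
  rw [hLsurj, finrank_top, Module.finrank_pi, Fintype.card_fin] at hd1
  have hd2 := LinearMap.finrank_range_add_finrank_ker Q
  have hrange : LinearMap.range Q = LinearMap.ker L :=
    Submodule.eq_of_le_of_finrank_le hle (by omega)
  rw [hrange, LinearMap.mem_ker]
  funext i
  rw [hLapp]
  have hBx : B (x : V) (bK i : V) = 0 := by
    rw [← hdesc]
    exact h _
  rw [hherm, hBx, star_zero]
  rfl

end Nondeg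
/-- The signature of a Hermitian matrix: the number of positive eigenvalues minus the
number of negative eigenvalues. -/
noncomputable def hermitianSignature {n : Type*} [Fintype n] [DecidableEq n]
    {M : Matrix n n ℂ} (hM : M.IsHermitian) : ℤ :=
  ((Finset.univ.filter fun i => 0 < hM.eigenvalues i).card : ℤ) -
    ((Finset.univ.filter fun i => hM.eigenvalues i < 0).card : ℤ)

/-- Step 2.2 of the no-ghost theorem: for a nondegenerate Hermitian form `B` and a
self-adjoint differential `Q` on a finite-dimensional complex vector space, the signature
of `B` on `V` equals the signature of the induced Hermitian form on the cohomology
`ker Q / im Q` (the BRST doublets make no net contribution to the signature). -/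
theorem signature_equals_cohomology_signature {V : Type*} [AddCommGroup V] [Module ℂ V]
    [FiniteDimensional ℂ V]
    (B : V → V → ℂ)
    (hlin : ∀ x, IsLinearMap ℂ (B x))
    (hherm : ∀ x y, B x y = star (B y x))
    (hnondeg : ∀ x, (∀ y, B x y = 0) → x = 0)
    (Q : V →ₗ[ℂ] V) (hQ2 : Q ∘ₗ Q = 0)
    (hselfadj : ∀ x y, B (Q x) y = B x (Q y))
    (Bbar : (↥(LinearMap.ker Q) ⧸ (LinearMap.range Q).comap (LinearMap.ker Q).subtype) →
      (↥(LinearMap.ker Q) ⧸ (LinearMap.range Q).comap (LinearMap.ker Q).subtype) → ℂ)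
    (hdesc : ∀ x y : LinearMap.ker Q,
      Bbar (Submodule.Quotient.mk x) (Submodule.Quotient.mk y) = B x y)
    (n : ℕ) (bV : Basis (Fin n) ℂ V)
    (hGV : (Matrix.of fun i j => B (bV i) (bV j)).IsHermitian)
    (m : ℕ)
    (bH : Basis (Fin m) ℂ
      (↥(LinearMap.ker Q) ⧸ (LinearMap.range Q).comap (LinearMap.ker Q).subtype))
    (hGH : (Matrix.of fun i j => Bbar (bH i) (bH j)).IsHermitian) :
    hermitianSignature hGV = hermitianSignature hGH := by
  classical
  have hmksurj := Submodule.Quotient.mk_surjective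
    ((LinearMap.range Q).comap (LinearMap.ker Q).subtype)
  -- the induced form is sesquilinear, hermitian, nondegenerate
  have hlinbar : ∀ xb, IsLinearMap ℂ (Bbar xb) := by
    intro xb
    obtain ⟨x, rfl⟩ := hmksurj xb
    constructor
    · intro yb zb
      obtain ⟨y, rfl⟩ := hmksurj yb
      obtain ⟨z, rfl⟩ := hmksurj zb
      rw [← Submodule.Quotient.mk_add, hdesc, hdesc, hdesc, Submodule.coe_add]
      exact (hlin _).map_add _ _
    · intro c yb
      obtain ⟨y, rfl⟩ := hmksurj yb
      rw [← Submodule.Quotient.mk_smul, hdesc, hdesc, Submodule.coe_smul]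
      exact (hlin _).map_smul c _
  have hhermbar : ∀ xb yb, Bbar xb yb = star (Bbar yb xb) := by
    intro xb yb
    obtain ⟨x, rfl⟩ := hmksurj xb
    obtain ⟨y, rfl⟩ := hmksurj yb
    rw [hdesc, hdesc]
    exact hherm _ _
  have hnondegbar := bbar_nondeg B hlin hherm hnondeg Q hQ2 hselfadj Bbar hdesc
  -- apply the eigenvalue-counting lemma on both spaces
  obtain ⟨hcV, ⟨SV, hSVr, hSVpos⟩, hboundV, ⟨TV, hTVr, hTVneg⟩, hboundVn⟩ :=
    key_counts B hlin hherm hnondeg bV hGV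
  obtain ⟨hcH, ⟨SH, hSHr, hSHpos⟩, hboundH, ⟨TH, hTHr, hTHneg⟩, hboundHn⟩ :=
    key_counts Bbar hlinbar hhermbar hnondegbar bH hGH
  -- dimension bookkeeping
  have hfrV : Module.finrank ℂ V = n := by
    rw [Module.finrank_eq_card_basis bV, Fintype.card_fin]
  have hfrH : Module.finrank ℂ
      (↥(LinearMap.ker Q) ⧸ (LinearMap.range Q).comap (LinearMap.ker Q).subtype) = m := by
    rw [Module.finrank_eq_card_basis bH, Fintype.card_fin]
  have hq := Submodule.finrank_quotient_add_finrank
    ((LinearMap.range Q).comap (LinearMap.ker Q).subtype)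
  have hrangele : LinearMap.range Q ≤ LinearMap.ker Q := by
    rintro _ ⟨u, rfl⟩
    rw [LinearMap.mem_ker, ← LinearMap.comp_apply, hQ2, LinearMap.zero_apply]
  have hcomap : Module.finrank ℂ ↥((LinearMap.range Q).comap (LinearMap.ker Q).subtype)
      = Module.finrank ℂ ↥(LinearMap.range Q) :=
    (Submodule.comapSubtypeEquivOfLe hrangele).finrank_eq
  have hd2 := LinearMap.finrank_range_add_finrank_ker Q
  -- bridge for the positive subspace
  obtain ⟨SbP, hSbPle, hSbPmem⟩ := bridge B hlin Q hQ2 hselfadj SV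
    (fun x hx h0 => ne_of_gt (hSVpos x hx h0))
  have hSbPpos : ∀ z ∈ SbP, z ≠ 0 → 0 < (Bbar z z).re := by
    intro z hz hz0
    obtain ⟨x, hxS, hmk, hne⟩ := hSbPmem z hz
    rw [← hmk, hdesc]
    exact hSVpos _ hxS (hne hz0)
  have hP2 := hboundH SbP hSbPpos
  -- bridge for the negative subspace
  obtain ⟨SbN, hSbNle, hSbNmem⟩ := bridge B hlin Q hQ2 hselfadj TV
    (fun x hx h0 => ne_of_lt (hTVneg x hx h0))
  have hSbNneg : ∀ z ∈ SbN, z ≠ 0 → (Bbar z z).re < 0 := by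
    intro z hz hz0
    obtain ⟨x, hxS, hmk, hne⟩ := hSbNmem z hz
    rw [← hmk, hdesc]
    exact hTVneg _ hxS (hne hz0)
  have hN2 := hboundHn SbN hSbNneg
  -- conclude
  show ((Finset.univ.filter fun i => 0 < hGV.eigenvalues i).card : ℤ) -
      ((Finset.univ.filter fun i => hGV.eigenvalues i < 0).card : ℤ) =
    ((Finset.univ.filter fun i => 0 < hGH.eigenvalues i).card : ℤ) -
      ((Finset.univ.filter fun i => hGH.eigenvalues i < 0).card : ℤ)
  omega
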